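/- arXiv:1106.4654 — 4 statements merged into one kernel-verified Lean document; each statement's English description precedes it below -/
import Mathlib

section
/- Let A be a self-adjoint operator on a Hilbert space H and let B(A)* be the dual Besov space with norm ‖u‖_{B*} = sup_{j≥1} R_j^{-1/2} ‖F(R_{j-1} ≤ |A| < R_j) u‖, where R_0 = 0 and R_j = 2^{j-1} for j ≥ 1. Then for every u ∈ B(A)*, one has ‖u‖_{B*} ≤ sup_{R>1} R^{-1/2} ‖F(|A| < R) u‖ ≤ 2 ‖u‖_{B*}. -/
open scoped InnerProductSpace ENNReal

noncomputable section

/-- The dyadic radii: `R_0 = 0`, `R_j = 2^(j-1)` for `j ≥ 1`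
(here indexed so that `dyadicR (k+1) = 2^k`). -/
def dyadicR : ℕ → ℝ
  | 0 => 0
  | k + 1 => 2 ^ k

/-- An abstract projection-valued (spectral) measure on `ℝ`, modelling the spectral
resolution of a self-adjoint operator `A` on a complex Hilbert space `H`:
`P S` is the spectral projection of `A` onto the Borel set `S`. -/
structure SpectralMeasure (H : Type*) [NormedAddCommGroup H] [InnerProductSpace ℂ H]
    [CompleteSpace H] where
  P : Set ℝ → H →L[ℂ] H
  inter : ∀ S T : Set ℝ, (P S).comp (P T) = P (S ∩ T)
  symm : ∀ (S : Set ℝ) (u v : H), ⟪P S u, v⟫_ℂ = ⟪u, P S v⟫_ℂ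
  empty : P ∅ = 0
  univ : P Set.univ = ContinuousLinearMap.id ℂ H
  hasSum_iUnion : ∀ S : ℕ → Set ℝ, Pairwise (Function.onFun Disjoint S) →
    ∀ u : H, HasSum (fun n => P (S n) u) (P (⋃ n, S n) u)

variable {H : Type*} [NormedAddCommGroup H] [InnerProductSpace ℂ H] [CompleteSpace H]

/-- The spectral projection `F_j(A)` onto `{R_{j-1} ≤ |A| < R_j}` (0-indexed: `band k`
corresponds to `F_{k+1}`). -/
def SpectralMeasure.band (A : SpectralMeasure H) (k : ℕ) : H →L[ℂ] H :=
  A.P {t : ℝ | dyadicR k ≤ |t| ∧ |t| < dyadicR (k + 1)}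

/-- The Besov norm `‖u‖_B = Σ_j R_j^{1/2} ‖F_j(A) u‖`, valued in `ℝ≥0∞`;
`u ∈ B(A)` precisely when this is finite. -/
def SpectralMeasure.besov (A : SpectralMeasure H) (u : H) : ℝ≥0∞ :=
  ∑' k : ℕ, ENNReal.ofReal (Real.sqrt (dyadicR (k + 1)) * ‖A.band k u‖)

/-- The dual Besov norm `‖u‖_{B*} = sup_{j≥1} R_j^{-1/2} ‖F_j(A) u‖`, valued in `ℝ≥0∞`. -/
def SpectralMeasure.dualNorm (A : SpectralMeasure H) (u : H) : ℝ≥0∞ :=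
  ⨆ k : ℕ, ENNReal.ofReal ((Real.sqrt (dyadicR (k + 1)))⁻¹ * ‖A.band k u‖)

/-! Spectral projections are orthogonal projections, and `S ↦ ‖F(S) u‖²` is additive on disjoint
sets. Hence `‖F(|A| < R_n) u‖² = Σ_{j ≤ n} ‖F_j u‖² ≤ Σ_{j ≤ n} R_j ‖u‖²_{B*} ≤ 2 R_n ‖u‖²_{B*}`, and
rounding `R ≥ 1` up to a dyadic radius `R_n ≤ 2R` gives `‖F(|A| < R) u‖² ≤ 4R ‖u‖²_{B*}`.
Conversely `F_j` projects into `{|A| < R}` for every `R > R_j`, and `R ↓ R_j` gives the first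
inequality. -/

theorem dyadicR_succ (k : ℕ) : dyadicR (k + 1) = 2 ^ k := rfl

namespace SpectralMeasure

variable (A : SpectralMeasure H)

theorem P_apply_P (S T : Set ℝ) (u : H) : A.P S (A.P T u) = A.P (S ∩ T) u := by
  rw [← A.inter]; rfl

theorem norm_P_apply_sq (S : Set ℝ) (u : H) : ‖A.P S u‖ ^ 2 = RCLike.re ⟪u, A.P S u⟫_ℂ := by
  rw [← inner_self_eq_norm_sq (𝕜 := ℂ), A.symm, P_apply_P, Set.inter_self]

theorem norm_P_apply_le (S : Set ℝ) (u : H) : ‖A.P S u‖ ≤ ‖u‖ := by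
  have h : ‖A.P S u‖ ^ 2 ≤ ‖u‖ * ‖A.P S u‖ := by
    rw [norm_P_apply_sq]
    exact (RCLike.re_le_norm _).trans (norm_inner_le_norm _ _)
  nlinarith [norm_nonneg (A.P S u), norm_nonneg u]

theorem norm_P_apply_mono {S T : Set ℝ} (hST : S ⊆ T) (u : H) : ‖A.P S u‖ ≤ ‖A.P T u‖ := by
  rw [← Set.inter_eq_left.mpr hST, ← P_apply_P]
  exact A.norm_P_apply_le S _

theorem P_union_apply {S T : Set ℝ} (hST : Disjoint S T) (u : H) :
    A.P (S ∪ T) u = A.P S u + A.P T u := by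
  let F : ℕ → Set ℝ := fun n => if n = 0 then S else if n = 1 then T else ∅
  have hF : Pairwise (Function.onFun Disjoint F) := by
    intro i j hij
    rcases i with _ | _ | i <;> rcases j with _ | _ | j <;> simp_all [F, Function.onFun, hST.symm]
  have hUnion : (⋃ n, F n) = S ∪ T := by
    ext t
    constructor
    · rintro ⟨_, ⟨n, rfl⟩, ht⟩
      rcases n with _ | _ | n <;> simp_all [F]
    · rintro (ht | ht)
      exacts [Set.mem_iUnion.mpr ⟨0, ht⟩, Set.mem_iUnion.mpr ⟨1, ht⟩]
  have hfinite : HasSum (fun n => A.P (F n) u) (∑ n ∈ Finset.range 2, A.P (F n) u) := by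
    refine hasSum_sum_of_ne_finset_zero fun n hn => ?_
    simp only [Finset.mem_range, not_lt] at hn
    simp [F, show n ≠ 0 by omega, show n ≠ 1 by omega, A.empty]
  rw [← hUnion, (A.hasSum_iUnion F hF u).unique hfinite]
  simp [F, Finset.sum_range_succ]

theorem norm_P_union_apply_sq {S T : Set ℝ} (hST : Disjoint S T) (u : H) :
    ‖A.P (S ∪ T) u‖ ^ 2 = ‖A.P S u‖ ^ 2 + ‖A.P T u‖ ^ 2 := by
  rw [norm_P_apply_sq, norm_P_apply_sq, norm_P_apply_sq, A.P_union_apply hST, inner_add_right,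
    map_add]

theorem norm_P_abs_lt_two_pow_sq (n : ℕ) (u : H) :
    ‖A.P {t : ℝ | |t| < 2 ^ n} u‖ ^ 2 = ∑ k ∈ Finset.range (n + 1), ‖A.band k u‖ ^ 2 := by
  induction n with
  | zero =>
    have hball : {t : ℝ | |t| < 2 ^ 0} = {t : ℝ | dyadicR 0 ≤ |t| ∧ |t| < dyadicR (0 + 1)} := by
      ext t; simp [dyadicR]
    rw [hball, Finset.sum_range_one]; rfl
  | succ n ih =>
    have hunion : {t : ℝ | |t| < 2 ^ (n + 1)} =
        {t : ℝ | |t| < 2 ^ n} ∪ {t : ℝ | dyadicR (n + 1) ≤ |t| ∧ |t| < dyadicR (n + 1 + 1)} := by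
      ext t
      simp only [dyadicR_succ, Set.mem_union, Set.mem_ofPred_eq]
      constructor
      · intro ht
        by_cases h : |t| < 2 ^ n
        exacts [Or.inl h, Or.inr ⟨not_lt.mp h, ht⟩]
      · rintro (h | h)
        exacts [h.trans (pow_lt_pow_right₀ one_lt_two n.lt_succ_self), h.2]
    have hdisj : Disjoint {t : ℝ | |t| < 2 ^ n}
        {t : ℝ | dyadicR (n + 1) ≤ |t| ∧ |t| < dyadicR (n + 1 + 1)} :=
      Set.disjoint_left.mpr fun _ h₁ h₂ => (not_lt.mpr h₂.1) h₁
    rw [hunion, A.norm_P_union_apply_sq hdisj, ih, Finset.sum_range_succ _ (n + 1)]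
    rfl

theorem norm_band_le_of_dualNorm_ne_top {u : H} (hu : A.dualNorm u ≠ ⊤) (k : ℕ) :
    ‖A.band k u‖ ≤ √(2 ^ k) * (A.dualNorm u).toReal := by
  have h := (ENNReal.ofReal_le_iff_le_toReal hu).mp (le_iSup (fun k =>
    ENNReal.ofReal ((√(dyadicR (k + 1)))⁻¹ * ‖A.band k u‖)) k)
  rwa [dyadicR_succ, inv_mul_le_iff₀ (by positivity)] at h

theorem norm_P_abs_lt_sq_le {u : H} (hu : A.dualNorm u ≠ ⊤) {R : ℝ} (hR : 1 ≤ R) :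
    ‖A.P {t : ℝ | |t| < R} u‖ ^ 2 ≤ 4 * R * (A.dualNorm u).toReal ^ 2 := by
  set m := (A.dualNorm u).toReal
  obtain ⟨n, hnR, hRn⟩ := exists_nat_pow_near hR one_lt_two
  have hband (k : ℕ) : ‖A.band k u‖ ^ 2 ≤ 2 ^ k * m ^ 2 := by
    simpa [mul_pow] using pow_le_pow_left₀ (norm_nonneg _) (A.norm_band_le_of_dualNorm_ne_top hu k) 2
  calc ‖A.P {t : ℝ | |t| < R} u‖ ^ 2 ≤ ‖A.P {t : ℝ | |t| < 2 ^ (n + 1)} u‖ ^ 2 := by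
        gcongr
        exact A.norm_P_apply_mono (fun t (ht : |t| < R) => ht.trans hRn) u
    _ = ∑ k ∈ Finset.range (n + 2), ‖A.band k u‖ ^ 2 := A.norm_P_abs_lt_two_pow_sq (n + 1) u
    _ ≤ ∑ k ∈ Finset.range (n + 2), 2 ^ k * m ^ 2 := Finset.sum_le_sum fun k _ => hband k
    _ ≤ 2 ^ (n + 2) * m ^ 2 := by
        rw [← Finset.sum_mul, geom_sum_eq (by norm_num)]
        gcongr
        norm_num
    _ = 4 * 2 ^ n * m ^ 2 := by ring
    _ ≤ 4 * R * m ^ 2 := by gcongr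

theorem ofReal_inv_sqrt_mul_norm_P_abs_lt_le (u : H) {R : ℝ} (hR : 1 < R) :
    ENNReal.ofReal ((√R)⁻¹ * ‖A.P {t : ℝ | |t| < R} u‖) ≤ 2 * A.dualNorm u := by
  by_cases hu : A.dualNorm u = ⊤
  · simp [hu]
  rw [ENNReal.ofReal_le_iff_le_toReal (by finiteness), ENNReal.toReal_mul, ENNReal.toReal_ofNat,
    inv_mul_le_iff₀ (by positivity), ← pow_le_pow_iff_left₀ (norm_nonneg _) (by positivity)
    two_ne_zero, mul_pow, mul_pow, Real.sq_sqrt (by positivity)]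
  linarith [A.norm_P_abs_lt_sq_le hu hR.le]

theorem ofReal_inv_sqrt_mul_norm_band_le_iSup (u : H) (k : ℕ) :
    ENNReal.ofReal ((√(dyadicR (k + 1)))⁻¹ * ‖A.band k u‖) ≤
      ⨆ (R : ℝ) (_ : 1 < R), ENNReal.ofReal ((√R)⁻¹ * ‖A.P {t : ℝ | |t| < R} u‖) := by
  rw [dyadicR_succ]
  have hcont : ContinuousAt (fun R : ℝ => ENNReal.ofReal ((√R)⁻¹ * ‖A.band k u‖)) (2 ^ k) := by
    refine ENNReal.continuous_ofReal.continuousAt.comp (ContinuousAt.mul ?_ continuousAt_const)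
    exact (Real.continuous_sqrt.continuousAt).inv₀ (by positivity)
  refine le_of_tendsto (hcont.tendsto.mono_left (nhdsWithin_le_nhds (s := Set.Ioi (2 ^ k)))) ?_
  filter_upwards [self_mem_nhdsWithin] with R (hR : 2 ^ k < R)
  refine le_trans ?_ (le_iSup₂ (f := fun (R : ℝ) (_ : 1 < R) =>
    ENNReal.ofReal ((√R)⁻¹ * ‖A.P {t : ℝ | |t| < R} u‖)) R ((one_le_pow₀ one_le_two).trans_lt hR))
  refine ENNReal.ofReal_le_ofReal (mul_le_mul_of_nonneg_left ?_ (by positivity))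
  exact A.norm_P_apply_mono (fun t ht => ht.2.trans_le (by rw [dyadicR_succ]; exact hR.le)) u

end SpectralMeasure

/-- `‖u‖_{B*} ≤ sup_{R>1} R^{-1/2} ‖F(|A| < R) u‖ ≤ 2 ‖u‖_{B*}`. -/
theorem stmt0 (A : SpectralMeasure H) (u : H) :
    A.dualNorm u ≤
      (⨆ (R : ℝ) (_ : 1 < R),
        ENNReal.ofReal ((Real.sqrt R)⁻¹ * ‖A.P {t : ℝ | |t| < R} u‖)) ∧
    (⨆ (R : ℝ) (_ : 1 < R),
        ENNReal.ofReal ((Real.sqrt R)⁻¹ * ‖A.P {t : ℝ | |t| < R} u‖)) ≤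
      2 * A.dualNorm u := by
  exact ⟨iSup_le (A.ofReal_inv_sqrt_mul_norm_band_le_iSup u),
    iSup₂_le fun _ hR => A.ofReal_inv_sqrt_mul_norm_P_abs_lt_le u hR⟩

end
end

section
/- Let A be a self-adjoint operator on a Hilbert space H and let T ∈ B(H) be accretive, i.e. T + T* ≥ 0. Suppose there are constants C₁, C₂, C₃ such that uniformly in n ∈ ℤ: ‖F(n ≤ A < n+1) T F(n ≤ A < n+1)‖ ≤ C₁, ‖F(A < n) T F(n ≤ A < n+1)‖ ≤ C₂, and ‖F(n ≤ A < n+1) T F(A ≥ n)‖ ≤ C₃. Then for all m, n ∈ ℤ, ‖F(m ≤ A < m+1) T F(n ≤ A < n+1)‖ ≤ 2C₁ + C₂ + C₃. -/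
open scoped InnerProductSpace ENNReal

noncomputable section

variable {H : Type*} [NormedAddCommGroup H] [InnerProductSpace ℂ H] [CompleteSpace H]

/-- The unit spectral band `{t | n ≤ t < n+1}` for `n ∈ ℤ`. -/
def unitBand (n : ℤ) : Set ℝ := {t : ℝ | (n : ℝ) ≤ t ∧ t < (n : ℝ) + 1}

/-!
Blocks above the diagonal (`m < n`) factor through `F(A < n) T F(n ≤ A < n+1)` and are bounded
by `C₂`. Below the diagonal (`m > n`) pass to the adjoint:
`(F_m T F_n)* = F_n (T + T*) F_m - F_n T F_m`. The second term factors through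
`F(n ≤ A < n+1) T F(A ≥ n)` and is bounded by `C₃`. The first is bounded by `2 C₁` through the
Cauchy–Schwarz inequality for the positive semi-inner product `⟪(T + T*) u, v⟫`, whose diagonal
values on the range of a block projection `F_k` are `2 Re ⟪u, F_k T F_k u⟫ ≤ 2 C₁ ‖u‖²`.
-/

open RCLike

namespace ContinuousLinearMap

variable {𝕜 E : Type*} [RCLike 𝕜] [NormedAddCommGroup E] [InnerProductSpace 𝕜 E]

theorem IsPositive.norm_inner_sq_le {S : E →L[𝕜] E} (hS : S.IsPositive) (x y : E) :
    ‖⟪S x, y⟫_𝕜‖ ^ 2 ≤ re ⟪S x, x⟫_𝕜 * re ⟪S y, y⟫_𝕜 := by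
  let c : PreInnerProductSpace.Core 𝕜 E :=
    { inner := fun u v => ⟪S u, v⟫_𝕜
      conj_inner_symm := fun u v => by
        simp only [inner_conj_symm, hS.inner_left_eq_inner_right]
      re_inner_nonneg := hS.re_inner_nonneg_left
      add_left := fun u v w => by simp only [map_add, inner_add_left]
      smul_left := fun u v r => by simp only [map_smul, inner_smul_left] }
  have hsymm : ‖⟪S y, x⟫_𝕜‖ = ‖⟪S x, y⟫_𝕜‖ := by
    rw [hS.inner_left_eq_inner_right, ← inner_conj_symm, norm_conj]
  have hcs := @InnerProductSpace.Core.inner_mul_inner_self_le 𝕜 E _ _ _ c x y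
  rw [sq]
  exact hsymm ▸ hcs

variable [CompleteSpace E]

theorem re_inner_apply_self_le_norm_comp_comp {P : E →L[𝕜] E} (hP : IsSelfAdjoint P)
    (T : E →L[𝕜] E) (x : E) : re ⟪P x, T (P x)⟫_𝕜 ≤ ‖P ∘L T ∘L P‖ * ‖x‖ ^ 2 :=
  calc re ⟪P x, T (P x)⟫_𝕜 = re ⟪x, (P ∘L T ∘L P) x⟫_𝕜 :=
        congrArg re (hP.isSymmetric _ _)
    _ ≤ ‖x‖ * ‖(P ∘L T ∘L P) x‖ := (re_le_norm _).trans (norm_inner_le_norm _ _)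
    _ ≤ ‖x‖ * (‖P ∘L T ∘L P‖ * ‖x‖) := by gcongr; exact le_opNorm _ _
    _ = ‖P ∘L T ∘L P‖ * ‖x‖ ^ 2 := by ring

theorem re_inner_add_adjoint_apply_self (T : E →L[𝕜] E) (x : E) :
    re ⟪(T + adjoint T) x, x⟫_𝕜 = 2 * re ⟪x, T x⟫_𝕜 := by
  rw [add_apply, inner_add_left, adjoint_inner_left, map_add, inner_re_symm (T x)]
  ring

theorem isPositive_add_adjoint {T : E →L[𝕜] E} (hT : ∀ x, 0 ≤ re ⟪x, T x⟫_𝕜) :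
    (T + adjoint T).IsPositive := by
  refine isPositive_def'.2 ⟨IsSelfAdjoint.add_star_self T, fun x => ?_⟩
  rw [reApplyInnerSelf_apply, re_inner_add_adjoint_apply_self]
  exact mul_nonneg zero_le_two (hT x)

variable {T P Q : E →L[𝕜] E} {C : ℝ}

theorem norm_comp_add_adjoint_comp_le (hT : ∀ x, 0 ≤ re ⟪x, T x⟫_𝕜)
    (hP : IsSelfAdjoint P) (hQ : IsSelfAdjoint Q)
    (hPC : ‖P ∘L T ∘L P‖ ≤ C) (hQC : ‖Q ∘L T ∘L Q‖ ≤ C) :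
    ‖Q ∘L (T + adjoint T) ∘L P‖ ≤ 2 * C := by
  have hC : 0 ≤ C := (norm_nonneg _).trans hPC
  have hdiag : ∀ {R : E →L[𝕜] E}, IsSelfAdjoint R → ‖R ∘L T ∘L R‖ ≤ C → ∀ x, ‖x‖ = 1 →
      re ⟪(T + adjoint T) (R x), R x⟫_𝕜 ≤ 2 * C := fun hR hRC x hx => by
    rw [re_inner_add_adjoint_apply_self]
    have := re_inner_apply_self_le_norm_comp_comp hR T x
    rw [hx, one_pow, mul_one] at this
    linarith
  refine opNorm_le_of_re_inner_le (by positivity) fun x y hx hy => ?_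
  have hcs := (isPositive_add_adjoint hT).norm_inner_sq_le (P x) (Q y)
  have hnorm : ‖⟪(T + adjoint T) (P x), Q y⟫_𝕜‖ ≤ 2 * C := by
    refine (pow_le_pow_iff_left₀ (norm_nonneg _) (by positivity) two_ne_zero).1 ?_
    nlinarith [hdiag hP hPC x hx, hdiag hQ hQC y hy,
      (isPositive_add_adjoint hT).re_inner_nonneg_left (P x)]
  calc re ⟪(Q ∘L (T + adjoint T) ∘L P) x, y⟫_𝕜
      = re ⟪(T + adjoint T) (P x), Q y⟫_𝕜 :=
        congrArg re (hQ.isSymmetric _ _)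
    _ ≤ 2 * C := (re_le_norm _).trans hnorm

theorem norm_comp_comp_le_of_accretive (hT : ∀ x, 0 ≤ re ⟪x, T x⟫_𝕜)
    (hP : IsSelfAdjoint P) (hQ : IsSelfAdjoint Q)
    (hPC : ‖P ∘L T ∘L P‖ ≤ C) (hQC : ‖Q ∘L T ∘L Q‖ ≤ C) :
    ‖P ∘L T ∘L Q‖ ≤ 2 * C + ‖Q ∘L T ∘L P‖ := by
  have hadj : adjoint (P ∘L T ∘L Q) = Q ∘L (T + adjoint T) ∘L P - Q ∘L T ∘L P := by
    rw [adjoint_comp, adjoint_comp, hP.adjoint_eq, hQ.adjoint_eq]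
    ext x
    simp
  calc ‖P ∘L T ∘L Q‖ = ‖Q ∘L (T + adjoint T) ∘L P - Q ∘L T ∘L P‖ := by
        rw [← hadj, adjoint.norm_map]
    _ ≤ ‖Q ∘L (T + adjoint T) ∘L P‖ + ‖Q ∘L T ∘L P‖ := norm_sub_le _ _
    _ ≤ 2 * C + ‖Q ∘L T ∘L P‖ := by
        gcongr; exact norm_comp_add_adjoint_comp_le hT hP hQ hPC hQC

end ContinuousLinearMap

namespace SpectralMeasure

open ContinuousLinearMap

variable (A : SpectralMeasure H)

theorem isStarProjection_P (S : Set ℝ) : IsStarProjection (A.P S) where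
  isIdempotentElem := by rw [IsIdempotentElem, mul_def, A.inter, Set.inter_self]
  isSelfAdjoint := isSelfAdjoint_iff_isSymmetric.2 (A.symm S)

theorem norm_P_le_one (S : Set ℝ) : ‖A.P S‖ ≤ 1 :=
  (A.isStarProjection_P S).norm_le

theorem norm_P_comp_le (S : Set ℝ) (X : H →L[ℂ] H) : ‖A.P S ∘L X‖ ≤ ‖X‖ :=
  (opNorm_comp_le _ _).trans (mul_le_of_le_one_left (norm_nonneg _) (A.norm_P_le_one S))

theorem norm_comp_P_le (S : Set ℝ) (X : H →L[ℂ] H) : ‖X ∘L A.P S‖ ≤ ‖X‖ :=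
  (opNorm_comp_le _ _).trans (mul_le_of_le_one_right (norm_nonneg _) (A.norm_P_le_one S))

variable {A}

theorem P_comp_P_eq_left {S S' : Set ℝ} (h : S ⊆ S') : A.P S ∘L A.P S' = A.P S := by
  rw [A.inter, Set.inter_eq_left.2 h]

theorem P_comp_P_eq_right {S S' : Set ℝ} (h : S ⊆ S') : A.P S' ∘L A.P S = A.P S := by
  rw [A.inter, Set.inter_eq_right.2 h]

end SpectralMeasure

theorem unitBand_subset_Iio {m n : ℤ} (h : m < n) : unitBand m ⊆ {t : ℝ | t < (n : ℝ)} :=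
  fun _ ht => ht.2.trans_le (by exact_mod_cast h)

theorem unitBand_subset_Ici {m n : ℤ} (h : n ≤ m) : unitBand m ⊆ {t : ℝ | (n : ℝ) ≤ t} :=
  fun _ ht => le_trans (by exact_mod_cast h) ht.1

/-- if `T` is bounded and accretive (`Re⟨u, Tu⟩ ≥ 0`), and the diagonal,
lower and upper block bounds `C₁, C₂, C₃` hold uniformly in `n ∈ ℤ`, then every block
`F(m ≤ A < m+1) T F(n ≤ A < n+1)` is bounded by `2C₁ + C₂ + C₃`. -/
theorem stmt7 (A : SpectralMeasure H) (T : H →L[ℂ] H)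
    (hacc : ∀ u : H, 0 ≤ (⟪u, T u⟫_ℂ).re)
    (C₁ C₂ C₃ : ℝ)
    (h1 : ∀ n : ℤ, ‖(A.P (unitBand n)).comp (T.comp (A.P (unitBand n)))‖ ≤ C₁)
    (h2 : ∀ n : ℤ, ‖(A.P {t : ℝ | t < (n : ℝ)}).comp (T.comp (A.P (unitBand n)))‖ ≤ C₂)
    (h3 : ∀ n : ℤ, ‖(A.P (unitBand n)).comp (T.comp (A.P {t : ℝ | (n : ℝ) ≤ t}))‖ ≤ C₃) :
    ∀ m n : ℤ,
      ‖(A.P (unitBand m)).comp (T.comp (A.P (unitBand n)))‖ ≤ 2 * C₁ + C₂ + C₃ := by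
  have hC₁ : 0 ≤ C₁ := (norm_nonneg _).trans (h1 0)
  have hC₂ : 0 ≤ C₂ := (norm_nonneg _).trans (h2 0)
  have hC₃ : 0 ≤ C₃ := (norm_nonneg _).trans (h3 0)
  intro m n
  rcases lt_trichotomy m n with hmn | rfl | hnm
  · have hupper : ‖A.P (unitBand m) ∘L T ∘L A.P (unitBand n)‖ ≤ C₂ := by
      rw [← SpectralMeasure.P_comp_P_eq_left (unitBand_subset_Iio hmn),
        ContinuousLinearMap.comp_assoc]
      exact (A.norm_P_comp_le _ _).trans (h2 n)
    linarith
  · linarith [h1 m]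
  · have hupper : ‖A.P (unitBand n) ∘L T ∘L A.P (unitBand m)‖ ≤ C₃ := by
      rw [← SpectralMeasure.P_comp_P_eq_right (unitBand_subset_Ici hnm.le),
        ← ContinuousLinearMap.comp_assoc, ← ContinuousLinearMap.comp_assoc]
      exact (A.norm_comp_P_le _ _).trans (h3 n)
    have hswap := ContinuousLinearMap.norm_comp_comp_le_of_accretive hacc
      (A.isStarProjection_P _).isSelfAdjoint (A.isStarProjection_P _).isSelfAdjoint (h1 m) (h1 n)
    linarith
end
end

section
/- Fix μ ∈ (0,2), K > 0 and λ ≥ 0, and define f_λ(x) = (λ + K⟨x⟩^{-μ})^{1/2} on ℝ^d, where ⟨x⟩ = (|x|²+1)^{1/2}. Then for every s ∈ ℝ and every multi-index α there is a constant C_α = C_α(s, μ, K) > 0, independent of λ ≥ 0, such that |∂_x^α (f_λ(x)^s)| ≤ C_α f_λ(x)^s ⟨x⟩^{-|α|} for all x ∈ ℝ^d. -/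
/-!
Fix `x` and write `f_λ = g ∘ v` with `v y = ⟨y⟩² / ⟨x⟩²` and
`g t = (λ + K' t^{-a})^b`, where `K' = K ⟨x⟩^{-μ}`, `a = μ / 2`, `b = s / 2`. Then `v x = 1` and
`‖D^i v(x)‖ ≤ (2 / ⟨x⟩)^i` for `i ≥ 1`, so the Faà di Bruno bound reduces the claim to
`|g^{(i)}(1)| ≤ A (λ + K')^b` with `A` independent of `λ` and `K'`.
For `W = K' t^{-a}` and `r = W / (λ + W) ∈ [0, 1]` one has `W' = -a W / t` and
`r' = -a r (1 - r) / t`, so by induction `g^{(i)}(t) = (λ + W)^b t^{-i} P_i(r)` for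
polynomials `P_i` depending only on `a`, `b` and `i`; `A` bounds them on `[0, 1]`.
-/

noncomputable section

/-- The Japanese bracket `⟨x⟩ = (|x|² + 1)^{1/2}` on `ℝ^d`. -/
def jap {d : ℕ} (x : EuclideanSpace ℝ (Fin d)) : ℝ := Real.sqrt (‖x‖ ^ 2 + 1)

open Real Set Polynomial

def iteratedDerivPoly (a b : ℝ) : ℕ → ℝ[X]
  | 0 => 1
  | i + 1 =>
    C (-(a * b)) * X * iteratedDerivPoly a b i - C (i : ℝ) * iteratedDerivPoly a b i
      - C a * X * (1 - X) * derivative (iteratedDerivPoly a b i)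

section

variable {a b lam K : ℝ}

theorem hasDerivAt_add_mul_rpow_neg_rpow_mul_eval (P : ℝ[X]) (i : ℕ) (hlam : 0 ≤ lam)
    (hK : 0 < K) {t : ℝ} (ht : 0 < t) :
    HasDerivAt
      (fun t => (lam + K * t ^ (-a)) ^ b * t ^ (-(i : ℝ)) *
        P.eval (K * t ^ (-a) / (lam + K * t ^ (-a))))
      ((lam + K * t ^ (-a)) ^ b * t ^ (-((i + 1 : ℕ) : ℝ)) *
        (C (-(a * b)) * X * P - C (i : ℝ) * P - C a * X * (1 - X) * derivative P).eval
          (K * t ^ (-a) / (lam + K * t ^ (-a)))) t := by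
  have hU0 : 0 < lam + K * t ^ (-a) := by positivity
  have hW : HasDerivAt (fun t => K * t ^ (-a)) (K * (-a * t ^ (-a - 1))) t :=
    (hasDerivAt_rpow_const (Or.inl ht.ne')).const_mul K
  have hU := hW.const_add lam
  have hUb := hU.rpow_const (p := b) (Or.inl hU0.ne')
  have hti : HasDerivAt (fun t => t ^ (-(i : ℝ))) (-(i : ℝ) * t ^ (-(i : ℝ) - 1)) t :=
    hasDerivAt_rpow_const (Or.inl ht.ne')
  have hP := (P.hasDerivAt _).comp t (hW.div hU hU0.ne')
  refine ((hUb.mul hti).mul hP).congr_deriv ?_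
  rw [rpow_sub ht, rpow_sub ht, rpow_sub hU0, rpow_one]
  push_cast
  rw [neg_add, rpow_add ht, rpow_neg_one]
  simp only [Function.comp_apply, Pi.mul_apply, Pi.div_apply, eval_sub, eval_mul, eval_C,
    eval_X, eval_one]
  rw [show K * (-a * (t ^ (-a) / t)) = -a * (K * t ^ (-a)) / t by ring]
  set W := K * t ^ (-a)
  set r := W / (lam + W) with hr
  generalize P.eval r = p, (derivative P).eval r = p'
  rw [hr]
  field_simp
  simp only [rpow_one]
  ring

theorem iteratedDeriv_add_mul_rpow_neg_rpow (hlam : 0 ≤ lam) (hK : 0 < K) (i : ℕ) {t : ℝ}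
    (ht : 0 < t) :
    iteratedDeriv i (fun t => (lam + K * t ^ (-a)) ^ b) t =
      (lam + K * t ^ (-a)) ^ b * t ^ (-(i : ℝ)) *
        (iteratedDerivPoly a b i).eval (K * t ^ (-a) / (lam + K * t ^ (-a))) := by
  induction i generalizing t with
  | zero => simp [iteratedDerivPoly]
  | succ i ih =>
    have hloc : iteratedDeriv i (fun t => (lam + K * t ^ (-a)) ^ b) =ᶠ[nhds t]
        fun t => (lam + K * t ^ (-a)) ^ b * t ^ (-(i : ℝ)) *
          (iteratedDerivPoly a b i).eval (K * t ^ (-a) / (lam + K * t ^ (-a))) :=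
      Filter.eventually_of_mem (Ioi_mem_nhds ht) fun _ hy => ih hy
    rw [iteratedDeriv_succ, hloc.deriv_eq]
    exact (hasDerivAt_add_mul_rpow_neg_rpow_mul_eval _ i hlam hK ht).deriv

theorem contDiffOn_add_mul_rpow_neg_rpow (hlam : 0 ≤ lam) (hK : 0 < K) (N : WithTop ℕ∞) :
    ContDiffOn ℝ N (fun t => (lam + K * t ^ (-a)) ^ b) (Ioi 0) := by
  intro t (ht : 0 < t)
  have hU : 0 < lam + K * t ^ (-a) := by positivity
  exact ((contDiffAt_const.add (contDiffAt_const.mul (contDiffAt_rpow_const_of_ne ht.ne'))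
    ).rpow_const_of_ne hU.ne').contDiffWithinAt

end

theorem exists_abs_eval_iteratedDerivPoly_le (a b : ℝ) (n : ℕ) :
    ∃ M, ∀ i ≤ n, ∀ r ∈ Icc (0 : ℝ) 1, |(iteratedDerivPoly a b i).eval r| ≤ M := by
  have hcont : Continuous fun p : ℕ × ℝ => (iteratedDerivPoly a b p.1).eval p.2 :=
    continuous_prod_of_discrete_left.2 fun i => (iteratedDerivPoly a b i).continuous
  obtain ⟨M, hM⟩ := ((Finset.range (n + 1)).finite_toSet.isCompact.prod isCompact_Icc
    ).exists_bound_of_continuousOn hcont.continuousOn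
  exact ⟨M, fun i hi r hr => hM (i, r) ⟨Finset.mem_range_succ_iff.2 hi, hr⟩⟩

theorem exists_abs_iteratedDeriv_add_mul_rpow_neg_rpow_le (a b : ℝ) (n : ℕ) :
    ∃ A > 0, ∀ i ≤ n, ∀ lam K t : ℝ, 0 ≤ lam → 0 < K → 0 < t →
      |iteratedDeriv i (fun t => (lam + K * t ^ (-a)) ^ b) t| ≤
        A * (lam + K * t ^ (-a)) ^ b * t ^ (-(i : ℝ)) := by
  obtain ⟨M, hM⟩ := exists_abs_eval_iteratedDerivPoly_le a b n
  refine ⟨max M 1, by positivity, fun i hi lam K t hlam hK ht => ?_⟩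
  have hW : 0 < K * t ^ (-a) := by positivity
  have hr : K * t ^ (-a) / (lam + K * t ^ (-a)) ∈ Icc (0 : ℝ) 1 :=
    ⟨by positivity, div_le_one_of_le₀ (by linarith) (by positivity)⟩
  have hpos : 0 < (lam + K * t ^ (-a)) ^ b * t ^ (-(i : ℝ)) := by positivity
  rw [iteratedDeriv_add_mul_rpow_neg_rpow hlam hK i ht, abs_mul, abs_of_pos hpos]
  exact (mul_le_mul_of_nonneg_left ((hM i hi _ hr).trans (le_max_left M 1)) hpos.le).trans_eq
    (by ring)

section InnerProductSpace

variable {E : Type*} [NormedAddCommGroup E] [InnerProductSpace ℝ E]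

theorem fderiv_mul_norm_sq_add_one (c : ℝ) :
    fderiv ℝ (fun y : E => c * (‖y‖ ^ 2 + 1)) =
      ⇑((2 * c) • innerSL ℝ : E →L[ℝ] E →L[ℝ] ℝ) := by
  funext x
  refine (((hasStrictFDerivAt_norm_sq x).hasFDerivAt.add_const 1).const_mul c).fderiv.trans ?_
  ext y
  simp only [smul_apply, smul_eq_mul, nsmul_eq_mul]
  ring

theorem norm_iteratedFDeriv_norm_sq_add_one_div_le (x : E) {i : ℕ} (hi : 1 ≤ i) :
    ‖iteratedFDeriv ℝ i (fun y : E => (‖x‖ ^ 2 + 1)⁻¹ * (‖y‖ ^ 2 + 1)) x‖ ≤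
      (2 / √(‖x‖ ^ 2 + 1)) ^ i := by
  set c := ‖x‖ ^ 2 + 1
  set L : E →L[ℝ] E →L[ℝ] ℝ := (2 * c⁻¹) • innerSL ℝ
  have hc : 0 < c := by positivity
  have hsqrt : √c ^ 2 = c := sq_sqrt hc.le
  have hL : ‖L‖ ≤ 2 / c := by
    refine (ContinuousLinearMap.opNorm_smul_le _ _).trans ?_
    rw [Real.norm_of_nonneg (by positivity)]
    exact mul_le_of_le_one_right (by positivity) (norm_innerSL_le ℝ)
  have hDL : fderiv ℝ (⇑L) = fun _ => L := funext fun _ => L.fderiv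
  obtain ⟨i, rfl⟩ := Nat.exists_eq_add_of_le' hi
  rw [← norm_iteratedFDeriv_fderiv, fderiv_mul_norm_sq_add_one]
  rcases i with _ | _ | i
  · have hx : ‖x‖ ≤ √c := le_sqrt_of_sq_le (by linarith)
    rw [norm_iteratedFDeriv_zero, pow_one, le_div_iff₀ (by positivity)]
    calc ‖L x‖ * √c ≤ 2 / c * ‖x‖ * √c := by gcongr; exact L.le_of_opNorm_le hL x
      _ ≤ 2 / c * √c * √c := by gcongr
      _ = 2 := by rw [mul_assoc, ← sq, hsqrt]; field_simp
  · rw [← norm_iteratedFDeriv_fderiv, hDL, norm_iteratedFDeriv_zero, div_pow, hsqrt]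
    exact hL.trans (by gcongr; norm_num)
  · rw [← norm_iteratedFDeriv_fderiv, hDL, iteratedFDeriv_const_of_ne (by omega)]
    simp only [Pi.zero_apply, norm_zero]
    positivity

end InnerProductSpace

theorem jap_rpow {d : ℕ} (x : EuclideanSpace ℝ (Fin d)) (p : ℝ) :
    jap x ^ p = (‖x‖ ^ 2 + 1) ^ (p / 2) := by
  rw [jap, sqrt_eq_rpow, ← rpow_mul (by positivity)]
  ring_nf

theorem rpow_jap_eq_comp {d : ℕ} (lam K μ s : ℝ) (x : EuclideanSpace ℝ (Fin d)) :
    (fun y : EuclideanSpace ℝ (Fin d) => (lam + K * jap y ^ (-μ)) ^ (s / 2)) =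
      (fun t => (lam + K * jap x ^ (-μ) * t ^ (-(μ / 2))) ^ (s / 2)) ∘
        fun y : EuclideanSpace ℝ (Fin d) => (‖x‖ ^ 2 + 1)⁻¹ * (‖y‖ ^ 2 + 1) := by
  funext y
  have hx : 0 < (‖x‖ ^ 2 + 1) ^ (-μ / 2) := by positivity
  simp only [Function.comp_apply, jap_rpow]
  rw [mul_rpow (by positivity) (by positivity), inv_rpow (by positivity), neg_div]
  field_simp

theorem stmt10_general (d : ℕ) (μ K : ℝ) (hK : 0 < K)
    (s : ℝ) (n : ℕ) :
    ∃ C > (0 : ℝ), ∀ lam : ℝ, 0 ≤ lam → ∀ x : EuclideanSpace ℝ (Fin d),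
      ‖iteratedFDeriv ℝ n (fun y => (lam + K * jap y ^ (-μ)) ^ (s / 2)) x‖ ≤
        C * (lam + K * jap x ^ (-μ)) ^ (s / 2) * jap x ^ (-(n : ℝ)) := by
  obtain ⟨A, hA0, hA⟩ := exists_abs_iteratedDeriv_add_mul_rpow_neg_rpow_le (μ / 2) (s / 2) n
  refine ⟨n.factorial * A * 2 ^ n, by positivity, fun lam hlam x => ?_⟩
  have hc : 0 < ‖x‖ ^ 2 + 1 := by positivity
  have hjap : 0 < jap x := sqrt_pos.2 hc
  have hK' : 0 < K * jap x ^ (-μ) := mul_pos hK (rpow_pos_of_pos hjap _)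
  have hv : ∀ y : EuclideanSpace ℝ (Fin d), (‖x‖ ^ 2 + 1)⁻¹ * (‖y‖ ^ 2 + 1) ∈ Ioi 0 :=
    fun _ => mem_Ioi.2 (by positivity)
  have hvx : (‖x‖ ^ 2 + 1)⁻¹ * (‖x‖ ^ 2 + 1) = 1 := inv_mul_cancel₀ hc.ne'
  have hg : ∀ i ≤ n, ‖iteratedFDerivWithin ℝ i
      (fun t => (lam + K * jap x ^ (-μ) * t ^ (-(μ / 2))) ^ (s / 2)) (Ioi 0) 1‖ ≤
        A * (lam + K * jap x ^ (-μ)) ^ (s / 2) := fun i hi => by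
    rw [iteratedFDerivWithin_of_isOpen i isOpen_Ioi (mem_Ioi.2 one_pos),
      norm_iteratedFDeriv_eq_norm_iteratedDeriv, Real.norm_eq_abs]
    simpa using hA i hi lam _ 1 hlam hK' one_pos
  have hbound := norm_iteratedFDeriv_comp_le' (range_subset_iff.2 hv) isOpen_Ioi.uniqueDiffOn
    (contDiffOn_add_mul_rpow_neg_rpow hlam hK' n)
    (contDiff_const.mul ((contDiff_norm_sq ℝ).add contDiff_const)) le_rfl x
    (D := 2 / jap x) (hvx ▸ hg) fun i hi _ => norm_iteratedFDeriv_norm_sq_add_one_div_le x hi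
  rw [← rpow_jap_eq_comp] at hbound
  refine hbound.trans_eq ?_
  rw [rpow_neg hjap.le (n : ℝ), rpow_natCast, div_pow]
  field_simp

/-- for `μ ∈ (0,2)`, `K > 0`, `f_λ(x) = (λ + K⟨x⟩^{-μ})^{1/2}`, `s ∈ ℝ`
and every derivative order `n` (multi-index derivatives of order `n` being encoded by
the `n`-th iterated Fréchet derivative) there is `C = C(n, s, μ, K) > 0`, independent
of `λ ≥ 0`, with `|∂^α (f_λ^s)(x)| ≤ C f_λ(x)^s ⟨x⟩^{-n}` for all `x`. -/
theorem stmt10 (d : ℕ) (μ K : ℝ) (hμ0 : 0 < μ) (hμ2 : μ < 2) (hK : 0 < K)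
    (s : ℝ) (n : ℕ) :
    ∃ C > (0 : ℝ), ∀ lam : ℝ, 0 ≤ lam → ∀ x : EuclideanSpace ℝ (Fin d),
      ‖iteratedFDeriv ℝ n (fun y => (lam + K * jap y ^ (-μ)) ^ (s / 2)) x‖ ≤
        C * (lam + K * jap x ^ (-μ)) ^ (s / 2) * jap x ^ (-(n : ℝ)) :=
  stmt10_general d μ K hK s n
end
end

section
/- Let μ ∈ (0,2) and set f_λ(x) = (λ + ⟨x⟩^{-μ})^{1/2} for λ ≥ 0, x ∈ ℝ^d. Let F_- denote the multiplication operator by the indicator of {x : λ < ⟨x⟩^{-μ}}. Then there exists C = C(μ) > 0, independent of λ ∈ [0, λ₀] (any fixed λ₀ > 0), such that for all u in the Besov space B(⟨x⟩), ‖f_λ^{-1/2} F_- u‖_{B(f_λ⟨x⟩)} ≤ C ‖u‖_{B(⟨x⟩)}, where B(g) for a positive function g denotes the dyadic Besov space of the multiplication operator by g on L²(ℝ^d). -/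
/-!
On `{λ < ⟨x⟩^{-μ}}` one has `⟨x⟩^{-μ} ≤ λ + ⟨x⟩^{-μ} < 2⟨x⟩^{-μ}`, so with `θ = 1 - μ/2 ≥ 0`
the weight `f_λ⟨x⟩` lies in `[⟨x⟩^θ, √2 ⟨x⟩^θ)`. On a dyadic shell `2^i ≤ ⟨x⟩ < 2^{i+1}` this
weight therefore meets at most `⌈θ + 3/2⌉` of its own dyadic shells, and on each such piece the
two Besov weights match pointwise: `R_{k+1} f_λ^{-1} ≤ 2 f_λ⟨x⟩ f_λ^{-1} = 2⟨x⟩ < 2 R_{j+1}`.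
Splitting every block of `B(f_λ⟨x⟩)` along the shells of `⟨x⟩` (the `L²` norm is subadditive
over a partition) and summing shell by shell gives the bound with `C = ⌈θ + 3/2⌉ √2`.
-/

open MeasureTheory Filter Topology
open scoped ENNReal

noncomputable section

/-- For the self-adjoint multiplication operator by the real function `a` on `L²(μ)`,
the norm of the spectral block `F(R_k ≤ |A| < R_{k+1}) u`, i.e. of the restriction of
`u` to `{R_k ≤ |a| < R_{k+1}}`, valued in `ℝ≥0∞`. -/
def blockE {α : Type*} [MeasurableSpace α] (μ : Measure α) (a : α → ℝ) (u : α → ℂ)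
    (k : ℕ) : ℝ≥0∞ :=
  eLpNorm (Set.indicator {x | dyadicR k ≤ |a x| ∧ |a x| < dyadicR (k + 1)} u) 2 μ

/-- The Besov norm `‖u‖_{B(a)} = Σ_j R_j^{1/2} ‖F_j u‖` of the multiplication
operator by `a` on `L²(μ)`, valued in `ℝ≥0∞`; `u ∈ B(a)` iff this is finite. -/
def besovE {α : Type*} [MeasurableSpace α] (μ : Measure α) (a : α → ℝ) (u : α → ℂ) :
    ℝ≥0∞ :=
  ∑' k : ℕ, ENNReal.ofReal (Real.sqrt (dyadicR (k + 1))) * blockE μ a u k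

/-- The dual Besov norm `‖u‖_{B(a)*} = sup_j R_j^{-1/2} ‖F_j u‖`, valued in `ℝ≥0∞`. -/
def dualE {α : Type*} [MeasurableSpace α] (μ : Measure α) (a : α → ℝ) (u : α → ℂ) :
    ℝ≥0∞ :=
  ⨆ k : ℕ, (ENNReal.ofReal (Real.sqrt (dyadicR (k + 1))))⁻¹ * blockE μ a u k

open scoped Function

theorem ENNReal.rpow_tsum_le_tsum_rpow {ι : Type*} (f : ι → ℝ≥0∞) {p : ℝ} (hp0 : 0 < p)
    (hp1 : p ≤ 1) : (∑' i, f i) ^ p ≤ ∑' i, f i ^ p := by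
  have hfin : ∀ s : Finset ι, (∑ i ∈ s, f i) ^ p ≤ ∑ i ∈ s, f i ^ p := by
    intro s
    induction s using Finset.cons_induction with
    | empty => simp [ENNReal.zero_rpow_of_pos hp0]
    | cons a s _ ih =>
      rw [Finset.sum_cons, Finset.sum_cons]
      exact (ENNReal.rpow_add_le_add_rpow _ _ hp0.le hp1).trans (add_le_add_right ih _)
  exact le_of_tendsto' ((ENNReal.continuous_rpow_const.tendsto _).comp
    ENNReal.summable.hasSum) fun s => (hfin s).trans (ENNReal.sum_le_tsum s)

theorem ENNReal.tsum_le_card_mul_of_forall_notMem_eq_zero {ι : Type*} {f : ι → ℝ≥0∞}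
    {s : Finset ι} {B : ℝ≥0∞} (hs : ∀ i ∉ s, f i = 0) (hB : ∀ i ∈ s, f i ≤ B) :
    ∑' i, f i ≤ s.card * B := by
  rw [tsum_eq_sum hs, ← nsmul_eq_mul]
  exact Finset.sum_le_card_nsmul s f B hB

section Indicator

variable {α : Type*} [MeasurableSpace α] {μ : Measure α} {p : ℝ≥0∞}

theorem MeasureTheory.eLpNorm_le_tsum_eLpNorm_indicator {E ι : Type*} [NormedAddCommGroup E]
    [Countable ι] (hp1 : 1 ≤ p) (hp : p ≠ ∞) (f : α → E) {s : ι → Set α}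
    (hs : ∀ i, MeasurableSet (s i)) (hd : Pairwise (Disjoint on s)) (hU : ⋃ i, s i = Set.univ) :
    eLpNorm f p μ ≤ ∑' i, eLpNorm ((s i).indicator f) p μ := by
  have hp0 : p ≠ 0 := (zero_lt_one.trans_le hp1).ne'
  have hr : 1 ≤ p.toReal := by
    simpa using ENNReal.toReal_mono hp hp1
  calc eLpNorm f p μ = (∫⁻ x, ‖f x‖ₑ ^ p.toReal ∂μ) ^ (1 / p.toReal) :=
        eLpNorm_eq_lintegral_rpow_enorm_toReal hp0 hp
    _ = (∑' i, ∫⁻ x in s i, ‖f x‖ₑ ^ p.toReal ∂μ) ^ (1 / p.toReal) := by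
        rw [← setLIntegral_univ, ← hU, lintegral_iUnion hs hd]
    _ ≤ ∑' i, (∫⁻ x in s i, ‖f x‖ₑ ^ p.toReal ∂μ) ^ (1 / p.toReal) :=
        ENNReal.rpow_tsum_le_tsum_rpow _ (by positivity)
          (by rw [div_le_one (by positivity)]; exact hr)
    _ = ∑' i, eLpNorm ((s i).indicator f) p μ := by
        simp_rw [eLpNorm_indicator_eq_eLpNorm_restrict (hs _),
          eLpNorm_eq_lintegral_rpow_enorm_toReal hp0 hp]

theorem MeasureTheory.ofReal_mul_eLpNorm_indicator_le {E F : Type*} [NormedAddCommGroup E]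
    [NormedSpace ℝ E] [NormedAddCommGroup F] {f : α → E} {g : α → F} {s t : Set α}
    (hst : s ⊆ t) {c C : ℝ} (hc : 0 ≤ c) (h : ∀ x ∈ s, c * ‖f x‖ ≤ C * ‖g x‖) :
    ENNReal.ofReal c * eLpNorm (s.indicator f) p μ ≤
      ENNReal.ofReal C * eLpNorm (t.indicator g) p μ := by
  have hpt : ∀ x, ‖(c • s.indicator f) x‖ ≤ C * ‖s.indicator g x‖ := by
    intro x
    by_cases hx : x ∈ s
    · simpa [Set.indicator_of_mem hx, norm_smul, abs_of_nonneg hc] using h x hx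
    · simp [Set.indicator_of_notMem hx]
  calc ENNReal.ofReal c * eLpNorm (s.indicator f) p μ = eLpNorm (c • s.indicator f) p μ := by
        rw [eLpNorm_const_smul, Real.enorm_of_nonneg hc]
    _ ≤ ENNReal.ofReal C * eLpNorm (s.indicator g) p μ :=
        eLpNorm_le_mul_eLpNorm_of_ae_le_mul (ae_of_all _ hpt) p
    _ ≤ ENNReal.ofReal C * eLpNorm (t.indicator g) p μ := by
        gcongr
        exact eLpNorm_mono fun x => norm_indicator_le_of_subset hst g x

end Indicator

theorem dyadicR_monotone : Monotone dyadicR := by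
  refine monotone_nat_of_le_succ fun k => ?_
  cases k with
  | zero => simp [dyadicR]
  | succ k => exact pow_le_pow_right₀ one_le_two k.le_succ

theorem dyadicR_nonneg (k : ℕ) : 0 ≤ dyadicR k :=
  dyadicR_monotone (Nat.zero_le k)

theorem dyadicR_succ_le_two_mul {k : ℕ} {y : ℝ} (hy : 1 ≤ y) (hk : dyadicR k ≤ y) :
    dyadicR (k + 1) ≤ 2 * y := by
  cases k with
  | zero => simp only [dyadicR, pow_zero]; linarith
  | succ k => simp only [dyadicR, pow_succ] at hk ⊢; linarith

section DyadicShell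

variable {α : Type*}

def dyadicShell (g : α → ℝ) (k : ℕ) : Set α :=
  (fun x => |g x|) ⁻¹' Set.Ico (dyadicR k) (dyadicR (k + 1))

theorem pairwise_disjoint_dyadicShell (g : α → ℝ) : Pairwise (Disjoint on dyadicShell g) :=
  fun _ _ hij => (dyadicR_monotone.pairwise_disjoint_on_Ico_succ hij).preimage _

theorem iUnion_dyadicShell (g : α → ℝ) : ⋃ k, dyadicShell g k = Set.univ := by
  have h := iUnion_Ico_map_succ_eq_Ici (f := dyadicR) (fun k => dyadicR_nonneg k)
    (fun ⟨M, hM⟩ => by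
      obtain ⟨n, hn⟩ := pow_unbounded_of_one_lt M one_lt_two
      exact (hM ⟨n + 1, rfl⟩).not_gt hn)
  simp only [dyadicShell, ← Set.preimage_iUnion, Order.succ_eq_add_one] at h ⊢
  rw [h]
  exact Set.eq_univ_of_forall fun x => abs_nonneg (g x)

variable [MeasurableSpace α]

theorem measurableSet_dyadicShell {g : α → ℝ} (hg : Measurable g) (k : ℕ) :
    MeasurableSet (dyadicShell g k) :=
  hg.abs measurableSet_Ico

theorem blockE_eq_eLpNorm_indicator_dyadicShell (μ : Measure α) (a : α → ℝ) (u : α → ℂ)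
    (k : ℕ) : blockE μ a u k = eLpNorm ((dyadicShell a k).indicator u) 2 μ := rfl

theorem besovE_le_of_dyadicShell_window (μ : Measure α) {a b : α → ℝ} (hb : Measurable b)
    {u v : α → ℂ} {C : ℝ} {N : ℕ}
    (hwin : ∀ j, ∃ m : ℕ, ∀ k, ∀ x ∈ dyadicShell a k ∩ dyadicShell b j, v x ≠ 0 →
      k ∈ Finset.Ico m (m + N))
    (hamp : ∀ j k, ∀ x ∈ dyadicShell a k ∩ dyadicShell b j,
      √(dyadicR (k + 1)) * ‖v x‖ ≤ C * √(dyadicR (j + 1)) * ‖u x‖) :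
    besovE μ a v ≤ ENNReal.ofReal (N * C) * besovE μ b u := by
  set w : ℕ → ℝ≥0∞ := fun k => ENNReal.ofReal √(dyadicR (k + 1))
  have hsum : ∀ j, ∑' k, w k * eLpNorm ((dyadicShell a k ∩ dyadicShell b j).indicator v) 2 μ ≤
      ENNReal.ofReal (N * C) * (w j * blockE μ b u j) := by
    intro j
    obtain ⟨m, hm⟩ := hwin j
    have hzero : ∀ k ∉ Finset.Ico m (m + N),
        w k * eLpNorm ((dyadicShell a k ∩ dyadicShell b j).indicator v) 2 μ = 0 := by
      intro k hk
      have : (dyadicShell a k ∩ dyadicShell b j).indicator v = 0 := funext fun x =>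
        Set.indicator_apply_eq_zero.2 fun hx => not_not.1 (mt (hm k x hx) hk)
      rw [this, eLpNorm_zero, mul_zero]
    have hblock : ∀ k ∈ Finset.Ico m (m + N),
        w k * eLpNorm ((dyadicShell a k ∩ dyadicShell b j).indicator v) 2 μ ≤
          ENNReal.ofReal C * (w j * blockE μ b u j) := by
      intro k _
      rw [blockE_eq_eLpNorm_indicator_dyadicShell, ← mul_assoc,
        ← ENNReal.ofReal_mul' (Real.sqrt_nonneg _)]
      exact ofReal_mul_eLpNorm_indicator_le Set.inter_subset_right (Real.sqrt_nonneg _)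
        (hamp j k)
    refine (ENNReal.tsum_le_card_mul_of_forall_notMem_eq_zero hzero hblock).trans_eq ?_
    rw [Nat.card_Ico, Nat.add_sub_cancel_left, ENNReal.ofReal_mul (Nat.cast_nonneg _),
      ENNReal.ofReal_natCast, mul_assoc]
  calc besovE μ a v = ∑' k, w k * eLpNorm ((dyadicShell a k).indicator v) 2 μ := rfl
    _ ≤ ∑' k, ∑' j, w k * eLpNorm ((dyadicShell a k ∩ dyadicShell b j).indicator v) 2 μ := by
        gcongr with k
        rw [ENNReal.tsum_mul_left]
        gcongr
        refine (eLpNorm_le_tsum_eLpNorm_indicator one_le_two ENNReal.ofNat_ne_top _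
          (measurableSet_dyadicShell hb) (pairwise_disjoint_dyadicShell b)
          (iUnion_dyadicShell b)).trans_eq ?_
        simp only [Set.indicator_indicator, Set.inter_comm]
    _ = ∑' j, ∑' k, w k * eLpNorm ((dyadicShell a k ∩ dyadicShell b j).indicator v) 2 μ :=
        ENNReal.tsum_comm
    _ ≤ ∑' j, ENNReal.ofReal (N * C) * (w j * blockE μ b u j) := ENNReal.tsum_le_tsum hsum
    _ = ENNReal.ofReal (N * C) * besovE μ b u := ENNReal.tsum_mul_left

end DyadicShell

theorem lt_and_lt_add_one_of_mem_Ico_dyadicR {y p q : ℝ} {k : ℕ} (hy : 1 ≤ y)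
    (hk : y ∈ Set.Ico (dyadicR k) (dyadicR (k + 1))) (hp : 2 ^ p ≤ y) (hq : y < 2 ^ q) :
    p < k ∧ (k : ℝ) < q + 1 := by
  cases k with
  | zero => simp only [dyadicR, pow_zero, Set.mem_Ico] at hk; linarith [hk.2]
  | succ n =>
    simp only [dyadicR, Set.mem_Ico, ← Real.rpow_natCast] at hk
    have hpn := (Real.rpow_lt_rpow_left_iff one_lt_two).1 (hp.trans_lt hk.2)
    have hnq := (Real.rpow_lt_rpow_left_iff one_lt_two).1 (hk.1.trans_lt hq)
    push_cast at hpn ⊢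
    constructor <;> linarith

section Bracket

variable {μ lam t : ℝ}

theorem sqrt_rpow_neg_mul_self (ht : 0 < t) : √(t ^ (-μ)) * t = t ^ (1 - μ / 2) := by
  rw [Real.sqrt_eq_rpow, ← Real.rpow_mul ht.le, ← Real.rpow_add_one ht.ne']
  ring_nf

theorem rpow_one_sub_half_le_sqrt_add_mul (ht : 0 < t) (hlam : 0 ≤ lam) :
    t ^ (1 - μ / 2) ≤ √(lam + t ^ (-μ)) * t := by
  rw [← sqrt_rpow_neg_mul_self ht]
  gcongr
  linarith

theorem sqrt_add_mul_lt_sqrt_two_mul_rpow (ht : 0 < t) (hlam : 0 ≤ lam)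
    (hF : lam < t ^ (-μ)) :
    √(lam + t ^ (-μ)) * t < √2 * t ^ (1 - μ / 2) := by
  rw [← sqrt_rpow_neg_mul_self ht, ← mul_assoc, ← Real.sqrt_mul zero_le_two]
  gcongr
  linarith

theorem one_le_sqrt_add_mul (hμ : μ ≤ 2) (ht : 1 ≤ t) (hlam : 0 ≤ lam) :
    1 ≤ √(lam + t ^ (-μ)) * t :=
  (Real.one_le_rpow ht (by linarith)).trans
    (rpow_one_sub_half_le_sqrt_add_mul (by linarith) hlam)

theorem sqrt_add_mul_dyadicIndex_bounds (hμ : μ ≤ 2) (hlam : 0 ≤ lam) (hF : lam < t ^ (-μ))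
    {i k : ℕ} (hti : 2 ^ i ≤ t) (hti' : t < 2 ^ (i + 1))
    (hk : |√(lam + t ^ (-μ)) * t| ∈ Set.Ico (dyadicR k) (dyadicR (k + 1))) :
    i * (1 - μ / 2) < k ∧ (k : ℝ) < i * (1 - μ / 2) + (1 - μ / 2 + 3 / 2) := by
  have hθ : 0 ≤ 1 - μ / 2 := by linarith
  have ht1 : 1 ≤ t := (one_le_pow₀ one_le_two).trans hti
  have ht0 : 0 < t := by linarith
  have hy := one_le_sqrt_add_mul hμ ht1 hlam
  rw [abs_of_pos (by linarith)] at hk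
  have hlow : (2 : ℝ) ^ (i * (1 - μ / 2)) ≤ √(lam + t ^ (-μ)) * t := by
    rw [Real.rpow_mul zero_le_two, Real.rpow_natCast]
    exact (Real.rpow_le_rpow (by positivity) hti hθ).trans
      (rpow_one_sub_half_le_sqrt_add_mul ht0 hlam)
  have hhigh : √(lam + t ^ (-μ)) * t < 2 ^ (1 / 2 + (i + 1) * (1 - μ / 2)) := by
    rw [Real.rpow_add two_pos, Real.rpow_mul zero_le_two, ← Real.sqrt_eq_rpow]
    refine (sqrt_add_mul_lt_sqrt_two_mul_rpow ht0 hlam hF).trans_le ?_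
    gcongr
    rw [← Nat.cast_add_one, Real.rpow_natCast]
    exact hti'.le
  have := lt_and_lt_add_one_of_mem_Ico_dyadicR hy hk hlow hhigh
  constructor <;> linarith

theorem sqrt_dyadicR_mul_rpow_le (hμ : μ ≤ 2) (hlam : 0 ≤ lam) (ht : 1 ≤ t) {j k : ℕ}
    (htj : t < dyadicR (j + 1))
    (hk : |√(lam + t ^ (-μ)) * t| ∈ Set.Ico (dyadicR k) (dyadicR (k + 1))) :
    √(dyadicR (k + 1)) * (lam + t ^ (-μ)) ^ (-(1 / 4 : ℝ)) ≤ √2 * √(dyadicR (j + 1)) := by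
  have ht0 : 0 < t := by linarith
  have hs : 0 < lam + t ^ (-μ) := by positivity
  have hy := one_le_sqrt_add_mul hμ ht hlam
  rw [abs_of_pos (by linarith)] at hk
  have hR := dyadicR_succ_le_two_mul hy hk.1
  have hquarter :
      (lam + t ^ (-μ)) ^ (-(1 / 4 : ℝ)) = √((lam + t ^ (-μ)) ^ (-(1 / 2 : ℝ))) := by
    rw [Real.sqrt_eq_rpow, ← Real.rpow_mul hs.le]
    norm_num
  have hcancel : √(lam + t ^ (-μ)) * (lam + t ^ (-μ)) ^ (-(1 / 2 : ℝ)) = 1 := by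
    rw [Real.sqrt_eq_rpow, ← Real.rpow_add hs]
    norm_num
  rw [hquarter, ← Real.sqrt_mul (dyadicR_nonneg _), ← Real.sqrt_mul zero_le_two]
  refine Real.sqrt_le_sqrt ?_
  calc dyadicR (k + 1) * (lam + t ^ (-μ)) ^ (-(1 / 2 : ℝ))
      ≤ 2 * (√(lam + t ^ (-μ)) * t) * (lam + t ^ (-μ)) ^ (-(1 / 2 : ℝ)) := by gcongr
    _ = 2 * t := by linear_combination 2 * t * hcancel
    _ ≤ 2 * dyadicR (j + 1) := by linarith

end Bracket

theorem one_le_jap {d : ℕ} (x : EuclideanSpace ℝ (Fin d)) : 1 ≤ jap x :=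
  Real.one_le_sqrt.2 (by nlinarith [sq_nonneg ‖x‖])

theorem jap_pos {d : ℕ} (x : EuclideanSpace ℝ (Fin d)) : 0 < jap x :=
  zero_lt_one.trans_le (one_le_jap x)

theorem continuous_jap {d : ℕ} : Continuous (jap (d := d)) := by
  unfold jap
  fun_prop

theorem exists_window_dyadicShell_jap {d : ℕ} {μ lam : ℝ} (hμ : μ ≤ 2) (hlam : 0 ≤ lam)
    (j : ℕ) : ∃ m : ℕ, ∀ k, ∀ x ∈ dyadicShell (fun x => √(lam + jap x ^ (-μ)) * jap x) k ∩
      dyadicShell (jap (d := d)) j, lam < jap x ^ (-μ) →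
        k ∈ Finset.Ico m (m + ⌈1 - μ / 2 + 3 / 2⌉₊) := by
  cases j with
  | zero =>
    refine ⟨0, fun k x hx _ => absurd hx.2.2 ?_⟩
    simpa [dyadicR, abs_of_pos (jap_pos x)] using one_le_jap x
  | succ i =>
    refine ⟨⌊(i : ℝ) * (1 - μ / 2)⌋₊ + 1, fun k x ⟨hxk, hxi⟩ hF => ?_⟩
    have hθ : 0 ≤ (i : ℝ) * (1 - μ / 2) := mul_nonneg i.cast_nonneg (by linarith)
    simp only [dyadicShell, Set.mem_preimage, Set.mem_Ico, dyadicR,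
      abs_of_pos (jap_pos x)] at hxi
    obtain ⟨hlo, hhi⟩ := sqrt_add_mul_dyadicIndex_bounds hμ hlam hF hxi.1 hxi.2 hxk
    have hfloor := Nat.lt_floor_add_one ((i : ℝ) * (1 - μ / 2))
    have hceil := Nat.le_ceil (1 - μ / 2 + 3 / 2)
    refine Finset.mem_Ico.2 ⟨(Nat.floor_lt hθ).2 hlo, ?_⟩
    exact_mod_cast (by linarith :
      (k : ℝ) < ⌊(i : ℝ) * (1 - μ / 2)⌋₊ + 1 + ⌈1 - μ / 2 + 3 / 2⌉₊)

theorem stmt13_general (d : ℕ) (μ : ℝ) (hμ2 : μ < 2) :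
    ∃ C > (0 : ℝ), ∀ lam : ℝ, 0 ≤ lam → ∀ u : EuclideanSpace ℝ (Fin d) → ℂ,
      besovE volume (fun x => Real.sqrt (lam + jap x ^ (-μ)) * jap x)
          (Set.indicator {x | lam < jap x ^ (-μ)}
            (fun x => (((lam + jap x ^ (-μ)) ^ (-(1 / 4 : ℝ)) : ℝ) • u x)))
        ≤ ENNReal.ofReal C * besovE volume jap u := by
  have hN : 0 < ⌈1 - μ / 2 + 3 / 2⌉₊ := Nat.ceil_pos.2 (by linarith)
  refine ⟨⌈1 - μ / 2 + 3 / 2⌉₊ * √2, by positivity, fun lam hlam u => ?_⟩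
  refine besovE_le_of_dyadicShell_window volume continuous_jap.measurable
    (fun j => ?_) (fun j k x hx => ?_)
  · obtain ⟨m, hm⟩ := exists_window_dyadicShell_jap (d := d) hμ2.le hlam j
    exact ⟨m, fun k x hx hv => hm k x hx (by_contra fun hF =>
      hv (Set.indicator_of_notMem (show x ∉ {x | lam < jap x ^ (-μ)} from hF) _))⟩
  · by_cases hF : x ∈ {x | lam < jap x ^ (-μ)}
    · have htj : jap x < dyadicR (j + 1) := (le_abs_self _).trans_lt hx.2.2
      have hjap := jap_pos x
      rw [Set.indicator_of_mem hF, norm_smul, Real.norm_of_nonneg (by positivity),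
        ← mul_assoc]
      exact mul_le_mul_of_nonneg_right
        (sqrt_dyadicR_mul_rpow_le hμ2.le hlam (one_le_jap x) htj hx.1) (norm_nonneg _)
    · rw [Set.indicator_of_notMem hF, norm_zero, mul_zero]
      positivity

/-- for `μ ∈ (0,2)` there is `C = C(μ) > 0`, independent of `λ ≥ 0`
(in particular uniform on any `[0, λ₀]`), such that with
`f_λ(x) = (λ + ⟨x⟩^{-μ})^{1/2}` and `F₋` the indicator of `{λ < ⟨x⟩^{-μ}}`,
`‖f_λ^{-1/2} F₋ u‖_{B(f_λ⟨x⟩)} ≤ C ‖u‖_{B(⟨x⟩)}` for all `u ∈ B(⟨x⟩)`. -/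
theorem stmt13 (d : ℕ) (μ : ℝ) (hμ0 : 0 < μ) (hμ2 : μ < 2) :
    ∃ C > (0 : ℝ), ∀ lam : ℝ, 0 ≤ lam → ∀ u : EuclideanSpace ℝ (Fin d) → ℂ,
      besovE volume (fun x => Real.sqrt (lam + jap x ^ (-μ)) * jap x)
          (Set.indicator {x | lam < jap x ^ (-μ)}
            (fun x => (((lam + jap x ^ (-μ)) ^ (-(1 / 4 : ℝ)) : ℝ) • u x)))
        ≤ ENNReal.ofReal C * besovE volume jap u :=
  stmt13_general d μ hμ2
end
end
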